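/- Let π : X → G be an augmented rack, let k[X] denote the free k-module on X (X →₀ k) with the right k[G]-module structure extending the action x · of(g) := x^g, and define for n ≥ 0 the k-submodule Iⁿ(X) := span_k { x · u : x ∈ X, u ∈ Iⁿ } of k[X] (so I⁰(X) = k[X]). Let φ : k[X] → k[G] be the k-linear map with φ(x) = of(π(x)) − 1 for x ∈ X. Then φ(Iⁿ(X)) ⊆ I^{n+1} for every n ≥ 0. -/

import Mathlib

noncomputable section

/-- The augmentation homomorphism `ε : k[G] → k`, sending every group element to `1`. -/
def aug (k : Type*) [Field k] (G : Type*) [Group G] :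
    MonoidAlgebra k G →ₐ[k] k :=
  MonoidAlgebra.lift k k G 1

/-- The powers of the augmentation ideal `I = ker ε`, regarded as `k`-submodules of
`k[G]`, with the convention `I ^ 0 = k[G]`. -/
def augPow (k : Type*) [Field k] (G : Type*) [Group G] :
    ℕ → Submodule k (MonoidAlgebra k G)
  | 0 => ⊤
  | n + 1 => LinearMap.ker (aug k G).toLinearMap * augPow k G n

variable {k : Type*} [Field k] [CharZero k] {G : Type*} [Group G] {X : Type*}

/-- The right action of `u ∈ k[G]` on a basis element `x` of `k[X] = X →₀ k`, i.e. the
`k`-linear extension in `u` of `x · of g := x ^ g`. -/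
def ractX (k : Type*) [Field k] {G : Type*} [Group G] {X : Type*}
    (act : X → G → X) (x : X) : MonoidAlgebra k G →ₗ[k] (X →₀ k) :=
  Finsupp.lift (X →₀ k) k G (fun g => Finsupp.single (act x g) 1) ∘ₗ
    (MonoidAlgebra.coeffLinearEquiv k).toLinearMap

/-- The submodule `Iⁿ(X) = span { x · u : x ∈ X, u ∈ Iⁿ }` of `k[X]`. -/
def augPowX (k : Type*) [Field k] {G : Type*} [Group G] {X : Type*}
    (act : X → G → X) (n : ℕ) : Submodule k (X →₀ k) :=
  Submodule.span k {w : X →₀ k | ∃ x : X, ∃ u ∈ augPow k G n, w = ractX k act x u}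

/-- The `k`-linear map `φ : k[X] → k[G]` with `φ x = of (π x) − 1`. -/
def phi (k : Type*) [Field k] {G : Type*} [Group G] {X : Type*}
    (π : X → G) : (X →₀ k) →ₗ[k] MonoidAlgebra k G :=
  Finsupp.lift (MonoidAlgebra k G) k X fun x => MonoidAlgebra.of k G (π x) - 1

/-- The augmentation ideal as a `k`-submodule. -/
def AugI (k : Type*) [Field k] (G : Type*) [Group G] : Submodule k (MonoidAlgebra k G) :=
  LinearMap.ker (aug k G).toLinearMap

set_option linter.unusedSectionVars false
set_option maxHeartbeats 1000000

lemma augPow_zero : augPow k G 0 = ⊤ := rfl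

lemma augPow_succ (n : ℕ) : augPow k G (n + 1) = AugI k G * augPow k G n := rfl

lemma aug_of (g : G) : aug k G (MonoidAlgebra.of k G g) = 1 := by
  simp [aug]

lemma mem_AugI_iff {u : MonoidAlgebra k G} : u ∈ AugI k G ↔ aug k G u = 0 :=
  LinearMap.mem_ker

lemma of_sub_one_mem (g : G) : MonoidAlgebra.of k G g - 1 ∈ AugI k G := by
  rw [mem_AugI_iff, map_sub, aug_of, map_one, sub_self]

lemma top_mul_AugI_le : (⊤ : Submodule k (MonoidAlgebra k G)) * AugI k G ≤ AugI k G := by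
  rw [Submodule.mul_le]
  intro a _ v hv
  rw [mem_AugI_iff, map_mul, mem_AugI_iff.mp hv, mul_zero]

lemma AugI_le_aug1 : AugI k G ≤ augPow k G 1 := by
  intro v hv
  rw [augPow_succ]
  simpa [augPow_zero] using Submodule.mul_mem_mul hv (Submodule.mem_top (x := (1 : MonoidAlgebra k G)) (R := k))

lemma augPow_mul_AugI_le (m : ℕ) : augPow k G m * AugI k G ≤ augPow k G (m + 1) := by
  induction m with
  | zero =>
    rw [augPow_zero]
    exact le_trans top_mul_AugI_le AugI_le_aug1
  | succ n ih =>
    rw [augPow_succ, mul_assoc, augPow_succ]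
    exact mul_le_mul' le_rfl ih

lemma top_mul_augPow_le (m : ℕ) :
    (⊤ : Submodule k (MonoidAlgebra k G)) * augPow k G (m + 1) ≤ augPow k G (m + 1) := by
  rw [augPow_succ, ← mul_assoc]
  exact mul_le_mul' top_mul_AugI_le le_rfl

lemma mul_mem_augPow {b a : MonoidAlgebra k G} {m : ℕ} (ha : a ∈ augPow k G (m + 1)) :
    b * a ∈ augPow k G (m + 1) :=
  top_mul_augPow_le m (Submodule.mul_mem_mul Submodule.mem_top ha)

lemma conj_mul_key {R : Type*} [Ring R] {x y : R} (h : y * x = 1) (v w : R) :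
    x * (v * w) * y = (x * v * y) * (x * w * y) := by
  simp only [mul_assoc]
  rw [← mul_assoc y x, h, one_mul]

lemma conj_mem_augPow (g : G) {a : MonoidAlgebra k G} {m : ℕ} (ha : a ∈ augPow k G m) :
    MonoidAlgebra.of k G g⁻¹ * a * MonoidAlgebra.of k G g ∈ augPow k G m := by
  induction m generalizing a with
  | zero => exact Submodule.mem_top
  | succ n ih =>
    rw [augPow_succ] at ha ⊢
    refine Submodule.mul_induction_on ha (fun v hv w hw => ?_) (fun x y hx hy => ?_)
    · have h1 : MonoidAlgebra.of k G g * MonoidAlgebra.of k G g⁻¹ = 1 := by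
        rw [← map_mul, mul_inv_cancel, map_one]
      rw [conj_mul_key h1 v w]
      refine Submodule.mul_mem_mul ?_ (ih hw)
      rw [mem_AugI_iff, map_mul, map_mul, aug_of, aug_of, mem_AugI_iff.mp hv, one_mul, mul_one]
    · have : MonoidAlgebra.of k G g⁻¹ * (x + y) * MonoidAlgebra.of k G g =
          MonoidAlgebra.of k G g⁻¹ * x * MonoidAlgebra.of k G g +
          MonoidAlgebra.of k G g⁻¹ * y * MonoidAlgebra.of k G g := by noncomm_ring
      rw [this]
      exact add_mem hx hy

lemma conj_sub_mem_augPow (g : G) {a : MonoidAlgebra k G} {m : ℕ} (ha : a ∈ augPow k G m) :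
    MonoidAlgebra.of k G g⁻¹ * a * MonoidAlgebra.of k G g - a ∈ augPow k G (m + 1) := by
  have key : MonoidAlgebra.of k G g⁻¹ * a * MonoidAlgebra.of k G g - a =
      MonoidAlgebra.of k G g⁻¹ * (a * (MonoidAlgebra.of k G g - 1)) +
      (MonoidAlgebra.of k G g⁻¹ - 1) * a := by noncomm_ring
  rw [key]
  refine add_mem (mul_mem_augPow ?_) ?_
  · exact augPow_mul_AugI_le m (Submodule.mul_mem_mul ha (of_sub_one_mem g))
  · rw [augPow_succ]
    exact Submodule.mul_mem_mul (of_sub_one_mem _) ha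

lemma AugI_le_span : AugI k G ≤
    Submodule.span k {w : MonoidAlgebra k G | ∃ g : G, w = MonoidAlgebra.of k G g - 1} := by
  intro u hu
  have main : ∀ u : MonoidAlgebra k G,
      u - aug k G u • (1 : MonoidAlgebra k G) ∈ Submodule.span k
        {w : MonoidAlgebra k G | ∃ g : G, w = MonoidAlgebra.of k G g - 1} := by
    intro u
    induction u using MonoidAlgebra.induction_linear with
    | zero => simp
    | add f g hf hg =>
      rw [map_add, add_smul, add_sub_add_comm]
      exact add_mem hf hg
    | single g c =>
      have h1 : (MonoidAlgebra.single g c : MonoidAlgebra k G) = c • MonoidAlgebra.of k G g := by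
        rw [MonoidAlgebra.of_apply, MonoidAlgebra.smul_single, smul_eq_mul, mul_one]
      have h2 : aug k G (MonoidAlgebra.single g c : MonoidAlgebra k G) = c := by
        rw [h1, map_smul, aug_of, smul_eq_mul, mul_one]
      rw [h2, h1, ← smul_sub]
      exact Submodule.smul_mem _ c (Submodule.subset_span ⟨g, rfl⟩)
  have h := main u
  rwa [mem_AugI_iff.mp hu, zero_smul, sub_zero] at h

/-- The adjoint action `Ad u a = Σ_g u_g • (g⁻¹ * a * g)`. -/
def Ad : MonoidAlgebra k G →ₗ[k] MonoidAlgebra k G →ₗ[k] MonoidAlgebra k G :=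
  Finsupp.lift (MonoidAlgebra k G →ₗ[k] MonoidAlgebra k G) k G (fun g =>
    (LinearMap.mulRight k (MonoidAlgebra.of k G g)).comp
      (LinearMap.mulLeft k (MonoidAlgebra.of k G g⁻¹))) ∘ₗ
    (MonoidAlgebra.coeffLinearEquiv k).toLinearMap

lemma Ad_single (g : G) (c : k) (a : MonoidAlgebra k G) :
    Ad (MonoidAlgebra.single g c) a =
      c • (MonoidAlgebra.of k G g⁻¹ * a * MonoidAlgebra.of k G g) := by
  have h : Ad (MonoidAlgebra.single g c) a =
      ((Finsupp.single g c).sum fun g' (r : k) =>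
        r • ((LinearMap.mulRight k (MonoidAlgebra.of k G g')).comp
          (LinearMap.mulLeft k (MonoidAlgebra.of k G g'⁻¹)))) a := rfl
  rw [h, Finsupp.sum_single_index (by simp)]
  simp [mul_assoc]

lemma Ad_of (g : G) (a : MonoidAlgebra k G) :
    Ad (MonoidAlgebra.of k G g) a =
      MonoidAlgebra.of k G g⁻¹ * a * MonoidAlgebra.of k G g := by
  have h := Ad_single g 1 a
  rw [one_smul] at h
  exact h

lemma Ad_one (a : MonoidAlgebra k G) : Ad (1 : MonoidAlgebra k G) a = a := by
  rw [show (1 : MonoidAlgebra k G) = MonoidAlgebra.of k G 1 from rfl, Ad_of]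
  simp [inv_one, ← MonoidAlgebra.one_def]

lemma Ad_mul (u w a : MonoidAlgebra k G) : Ad (u * w) a = Ad w (Ad u a) := by
  induction u using MonoidAlgebra.induction_linear with
  | zero => simp
  | add f f' hf hf' => simp [add_mul, map_add, hf, hf']
  | single g c =>
    induction w using MonoidAlgebra.induction_linear with
    | zero => simp
    | add f f' hf hf' => simp [mul_add, map_add, hf, hf']
    | single h d =>
      rw [MonoidAlgebra.single_mul_single, Ad_single, Ad_single, Ad_single,
        mul_smul_comm, smul_mul_assoc, smul_smul, mul_comm d c, mul_inv_rev, map_mul, map_mul]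
      congr 1
      noncomm_ring

lemma Ad_mem_augPow : ∀ (n : ℕ) (u : MonoidAlgebra k G), u ∈ augPow k G n →
    ∀ (m : ℕ) (a : MonoidAlgebra k G), a ∈ augPow k G m → Ad u a ∈ augPow k G (n + m) := by
  intro n
  induction n with
  | zero =>
    intro u _ m a ha
    rw [Nat.zero_add]
    induction u using MonoidAlgebra.induction_linear with
    | zero => simpa using Submodule.zero_mem _
    | add f f' hf hf' =>
      rw [map_add, LinearMap.add_apply]
      exact add_mem (hf Submodule.mem_top) (hf' Submodule.mem_top)
    | single g c =>
      rw [Ad_single]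
      exact Submodule.smul_mem _ c (conj_mem_augPow g ha)
  | succ n ih =>
    intro u hu m a ha
    rw [augPow_succ] at hu
    refine Submodule.mul_induction_on hu (fun v hv w hw => ?_) (fun x y hx hy => ?_)
    · rw [Ad_mul]
      have hva : Ad v a ∈ augPow k G (m + 1) := by
        have hv' := AugI_le_span hv
        refine Submodule.span_induction (fun z hz => ?_) ?_ (fun z z' _ _ hz hz' => ?_)
          (fun c z _ hz => ?_) hv'
        · obtain ⟨g, rfl⟩ := hz
          rw [map_sub, LinearMap.sub_apply, Ad_of, Ad_one]
          exact conj_sub_mem_augPow g ha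
        · simpa using Submodule.zero_mem _
        · rw [map_add, LinearMap.add_apply]; exact add_mem hz hz'
        · rw [map_smul, LinearMap.smul_apply]; exact Submodule.smul_mem _ c hz
      have h := ih w hw (m + 1) _ hva
      have heq : n + (m + 1) = n + 1 + m := by omega
      rwa [heq] at h
    · rw [map_add, LinearMap.add_apply]
      exact add_mem hx hy

lemma ractX_single (act : X → G → X) (x : X) (g : G) (c : k) :
    ractX k act x (MonoidAlgebra.single g c) = c • Finsupp.single (act x g) (1 : k) := by
  have h : ractX k act x (MonoidAlgebra.single g c) =
      (Finsupp.single g c).sum fun g' (r : k) => r • Finsupp.single (act x g') (1 : k) := rfl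
  rw [h, Finsupp.sum_single_index (by simp)]

lemma phi_single (π : X → G) (x : X) (c : k) :
    phi k π (Finsupp.single x c) = c • (MonoidAlgebra.of k G (π x) - 1) := by
  have h : phi k π (Finsupp.single x c) =
      (Finsupp.single x c).sum fun x' (r : k) => r • (MonoidAlgebra.of k G (π x') - 1) := rfl
  rw [h, Finsupp.sum_single_index (by simp)]

lemma phi_ractX (act : X → G → X) (π : X → G)
    (π_act : ∀ (x : X) (g : G), π (act x g) = g⁻¹ * π x * g)
    (x : X) (u : MonoidAlgebra k G) :
    phi k π (ractX k act x u) = Ad u (MonoidAlgebra.of k G (π x) - 1) := by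
  induction u using MonoidAlgebra.induction_linear with
  | zero => simp
  | add f f' hf hf' => rw [map_add, map_add, map_add, LinearMap.add_apply, hf, hf']
  | single g c =>
    rw [ractX_single, map_smul, phi_single, one_smul, Ad_single, π_act]
    congr 1
    have h1 : MonoidAlgebra.of k G g⁻¹ * MonoidAlgebra.of k G g = 1 := by
      rw [← map_mul, inv_mul_cancel, map_one]
    rw [map_mul, map_mul, mul_sub, mul_one, sub_mul, h1]

/-- For an augmented rack `π : X → G`, the map `φ : k[X] → k[G]`,
`x ↦ of (π x) − 1`, satisfies `φ(Iⁿ(X)) ⊆ I^(n+1)` for every `n ≥ 0`. -/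
theorem phi_augPowX_le
    (act : X → G → X)
    (act_one : ∀ x, act x 1 = x)
    (act_mul : ∀ (x : X) (g h : G), act (act x g) h = act x (g * h))
    (π : X → G)
    (π_act : ∀ (x : X) (g : G), π (act x g) = g⁻¹ * π x * g)
    (n : ℕ) :
    Submodule.map (phi k π) (augPowX k act n) ≤ augPow k G (n + 1) := by
  rw [augPowX, Submodule.map_span_le]
  rintro w ⟨x, u, hu, rfl⟩
  rw [phi_ractX act π π_act]
  have h1 : MonoidAlgebra.of k G (π x) - 1 ∈ augPow k G 1 :=
    AugI_le_aug1 (of_sub_one_mem (π x))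
  exact Ad_mem_augPow n u hu 1 _ h1

end
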